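/- Let K and L be n×n Hermitian complex matrices, and let t₀ ∈ ℝ be such that K − t₀L is nonsingular. Then the function t ↦ Tr[(K − tL)₊] is differentiable at t₀ with derivative −Tr[L · {K > t₀L}], and moreover Tr[L · {K > t₀L}] = Tr[L · {K ≥ t₀L}]. -/

import Mathlib

/-!
Common setup: matrices are `n × n` complex matrices. Functions of Hermitian matrices are
taken via the spectral theorem (functional calculus). Matrix-valued integrals are Bochner
integrals (with respect to the entrywise sup norm; all norms on this finite-dimensional
space are equivalent, so the Bochner integral does not depend on this choice), and the
directional derivative `Dlog[B](H) = lim_{t→0} (log(B+tH) - log B)/t` is expressed through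
`HasDerivAt (fun t => mlog (B + t • H)) · 0`, which asserts both the existence of the limit
and its value.
-/

open MeasureTheory
open scoped ComplexOrder

attribute [local instance] Matrix.normedAddCommGroup Matrix.normedSpace

noncomputable section

variable {n : ℕ}

/-- Apply a real function to a Hermitian matrix via the spectral theorem
(junk value `0` if the matrix is not Hermitian). -/
def mfun (f : ℝ → ℝ) (M : Matrix (Fin n) (Fin n) ℂ) : Matrix (Fin n) (Fin n) ℂ :=
  if hM : M.IsHermitian then hM.cfc f else 0

/-- Matrix logarithm via functional calculus. -/
def mlog (M : Matrix (Fin n) (Fin n) ℂ) : Matrix (Fin n) (Fin n) ℂ :=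
  mfun Real.log M

/-- `{H > γ B}`: the orthogonal projection onto the sum of the eigenspaces of `H - γ B`
with strictly positive eigenvalues. -/
def projGt (H B : Matrix (Fin n) (Fin n) ℂ) (γ : ℝ) : Matrix (Fin n) (Fin n) ℂ :=
  mfun (fun x => if 0 < x then 1 else 0) (H - γ • B)

/-- `{H ≤ γ B} := 1 - {H > γ B}`. -/
def projLe (H B : Matrix (Fin n) (Fin n) ℂ) (γ : ℝ) : Matrix (Fin n) (Fin n) ℂ :=
  1 - projGt H B γ

/-- Positive part `M₊ = (√(M²) + M)/2` of a Hermitian matrix. -/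
def mposPart (M : Matrix (Fin n) (Fin n) ℂ) : Matrix (Fin n) (Fin n) ℂ :=
  (2 : ℂ)⁻¹ • (mfun Real.sqrt (M * M) + M)

/-- Quantum hockey-stick divergence `E_γ(A‖B) = Tr[(A - γ B)₊]`. -/
def hsd (γ : ℝ) (A B : Matrix (Fin n) (Fin n) ℂ) : ℝ :=
  ((mposPart (A - γ • B)).trace).re

/-- Umegaki relative entropy `D(A‖B) = Tr[A (log A - log B) + B - A]`, with the convention
`0 log 0 = 0` (the term `A log A` is computed by applying `x ↦ x * log x` to `A`). -/
def relEnt (A B : Matrix (Fin n) (Fin n) ℂ) : ℝ :=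
  ((mfun (fun x => x * Real.log x) A - A * mlog B + B - A).trace).re

section AuxLemmas
open Matrix

lemma contOn (f : ℝ → ℝ) (A : Matrix (Fin n) (Fin n) ℂ) : ContinuousOn f (spectrum ℝ A) := by
  rw [continuousOn_iff_continuous_restrict]; fun_prop

lemma hcfc_trace {A : Matrix (Fin n) (Fin n) ℂ} (hA : A.IsHermitian) (f : ℝ → ℝ) :
    (hA.cfc f).trace = ∑ i, (f (hA.eigenvalues i) : ℂ) := by
  rw [Matrix.IsHermitian.cfc, Unitary.conjStarAlgAut_apply, Matrix.trace_mul_comm, ← Matrix.mul_assoc,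
    Matrix.UnitaryGroup.star_mul_self, Matrix.one_mul, Matrix.trace_diagonal]
  rfl

lemma cfc_psd {A : Matrix (Fin n) (Fin n) ℂ} (hA : A.IsHermitian) (f : ℝ → ℝ)
    (hf : ∀ x, 0 ≤ f x) : (cfc f A).PosSemidef := by
  rw [hA.cfc_eq, Matrix.IsHermitian.cfc, Unitary.conjStarAlgAut_apply, Matrix.star_eq_conjTranspose]
  exact (Matrix.posSemidef_diagonal_iff.mpr (by
    intro i; simpa using Complex.zero_le_real.mpr (hf _))).mul_mul_conjTranspose_same _

lemma trace_ctms_nonneg (X : Matrix (Fin n) (Fin n) ℂ) : 0 ≤ ((Xᴴ * X).trace).re := by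
  rw [Matrix.trace, Complex.re_sum]
  apply Finset.sum_nonneg
  intro j _
  rw [Matrix.diag_apply, Matrix.mul_apply, Complex.re_sum]
  apply Finset.sum_nonneg
  intro i _
  simp only [Matrix.conjTranspose_apply, Complex.mul_re]
  simp [Complex.star_def]
  nlinarith [sq_nonneg (X i j).re, sq_nonneg (X i j).im]

lemma trace_psd_mul_nonneg {P Q : Matrix (Fin n) (Fin n) ℂ} (hP : P.PosSemidef)
    (hQ : Q.PosSemidef) : 0 ≤ ((P * Q).trace).re := by
  obtain ⟨C, rfl⟩ : ∃ C : Matrix (Fin n) (Fin n) ℂ, P = Cᴴ * C := by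
    open scoped MatrixOrder in
    obtain ⟨X, hX, -, hXe⟩ := sub_zero P ▸ CFC.exists_sqrt_of_isSelfAdjoint_of_quasispectrumRestricts
      hP.isHermitian (QuasispectrumRestricts.nnreal_of_nonneg hP.nonneg)
    rw [sub_zero] at hXe
    exact ⟨X, by rw [← hXe, ← Matrix.star_eq_conjTranspose, hX.star_eq]⟩
  obtain ⟨B, rfl⟩ : ∃ B : Matrix (Fin n) (Fin n) ℂ, Q = Bᴴ * B := by
    open scoped MatrixOrder in
    obtain ⟨X, hX, -, hXe⟩ := sub_zero Q ▸ CFC.exists_sqrt_of_isSelfAdjoint_of_quasispectrumRestricts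
      hQ.isHermitian (QuasispectrumRestricts.nnreal_of_nonneg hQ.nonneg)
    rw [sub_zero] at hXe
    exact ⟨X, by rw [← hXe, ← Matrix.star_eq_conjTranspose, hX.star_eq]⟩
  have h1 : (Cᴴ * C) * (Bᴴ * B) = Cᴴ * ((C * Bᴴ) * B) := by
    simp only [Matrix.mul_assoc]
  have h2 : (B * Cᴴ)ᴴ * (B * Cᴴ) = ((C * Bᴴ) * B) * Cᴴ := by
    simp only [Matrix.conjTranspose_mul, Matrix.conjTranspose_conjTranspose, Matrix.mul_assoc]
  calc (0:ℝ) ≤ (((B * Cᴴ)ᴴ * (B * Cᴴ)).trace).re := trace_ctms_nonneg _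
  _ = (((Cᴴ * C) * (Bᴴ * B)).trace).re := by rw [h2, h1, Matrix.trace_mul_comm]

lemma mfun_eq {M : Matrix (Fin n) (Fin n) ℂ} (hM : M.IsHermitian) (f : ℝ → ℝ) :
    mfun f M = cfc f M := by rw [mfun, dif_pos hM, hM.cfc_eq]

lemma mposPart_eq {M : Matrix (Fin n) (Fin n) ℂ} (hM : M.IsHermitian) :
    mposPart M = cfc (fun x : ℝ => x * (if 0 < x then 1 else 0)) M := by
  have hM' : IsSelfAdjoint M := hM
  have hMM : (M * M).IsHermitian := by
    unfold Matrix.IsHermitian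
    rw [Matrix.conjTranspose_mul, hM.eq]
  have h1 : M * M = cfc (fun x : ℝ => x * x) M := by
    rw [cfc_mul _ _ M (contOn _ _) (contOn _ _), cfc_id' ℝ M]
  have h2 : mfun Real.sqrt (M * M) = cfc (fun x : ℝ => |x|) M := by
    rw [mfun_eq hMM, h1, ← cfc_comp' Real.sqrt _ M
      Real.continuous_sqrt.continuousOn (contOn _ _) hM']
    exact cfc_congr fun x _ => Real.sqrt_mul_self_eq_abs x
  have h3 : mposPart M = ((2:ℝ)⁻¹) • cfc (fun x : ℝ => |x| + x) M := by
    rw [mposPart, h2, cfc_add M _ _ (contOn _ _) (contOn _ _), cfc_id' ℝ M,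
      ← algebraMap_smul ℂ ((2:ℝ)⁻¹)]
    norm_num
  rw [h3, ← cfc_smul ((2:ℝ)⁻¹) _ M (contOn _ _)]
  apply cfc_congr
  intro x _
  simp only [smul_eq_mul]
  rcases lt_or_ge 0 x with h | h
  · rw [if_pos h, abs_of_pos h]; ring
  · rw [if_neg (not_lt.mpr h), abs_of_nonpos h]; ring

lemma posPart_eq_mul_proj {M : Matrix (Fin n) (Fin n) ℂ} (hM : M.IsHermitian) :
    mposPart M = M * cfc (fun x : ℝ => if 0 < x then 1 else 0) M := by
  have hM' : IsSelfAdjoint M := hM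
  rw [mposPart_eq hM, cfc_mul _ _ M (contOn _ _) (contOn _ _), cfc_id' ℝ M]

lemma trace_mul_le_posPart {M X : Matrix (Fin n) (Fin n) ℂ} (hM : M.IsHermitian)
    (hX : X.PosSemidef) (hX1 : (1 - X).PosSemidef) :
    ((M * X).trace).re ≤ ((mposPart M).trace).re := by
  have hM' : IsSelfAdjoint M := hM
  set p : ℝ → ℝ := fun x => x * (if 0 < x then 1 else 0) with hp
  set m : ℝ → ℝ := fun x => p x - x with hm
  have hMeq : M = cfc p M - cfc m M := by
    rw [← cfc_sub p m M (contOn _ _) (contOn _ _)]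
    conv_lhs => rw [← cfc_id' ℝ M hM']
    exact cfc_congr fun x _ => by simp [hm]
  have hP := cfc_psd hM p (fun x => by
    show 0 ≤ x * (if 0 < x then 1 else 0)
    split
    · rename_i h; nlinarith
    · simp)
  have hN := cfc_psd hM m (fun x => by
    show 0 ≤ x * (if 0 < x then 1 else 0) - x
    split
    · simp
    · rename_i h; nlinarith [le_of_not_gt h])
  have key : mposPart M - M * X = cfc p M * (1 - X) + cfc m M * X := by
    rw [mposPart_eq hM]
    nth_rewrite 2 [hMeq]
    noncomm_ring
  have htr : ((mposPart M).trace).re - ((M * X).trace).re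
      = ((cfc p M * (1 - X)).trace).re + ((cfc m M * X).trace).re := by
    rw [← Complex.sub_re, ← Matrix.trace_sub, key, Matrix.trace_add, Complex.add_re]
  have h1 := trace_psd_mul_nonneg hP hX1
  have h2 := trace_psd_mul_nonneg hN hX
  linarith

lemma spectrum_iff_det {A : Matrix (Fin n) (Fin n) ℂ} (μ : ℝ) :
    μ ∈ spectrum ℝ A ↔ ((μ:ℂ) • (1 : Matrix (Fin n) (Fin n) ℂ) - A).det = 0 := by
  rw [spectrum.mem_iff, Algebra.algebraMap_eq_smul_one, ← algebraMap_smul ℂ μ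
    (1 : Matrix (Fin n) (Fin n) ℂ), Matrix.isUnit_iff_isUnit_det, isUnit_iff_ne_zero, not_ne_iff]
  rfl

lemma exists_gap (K L : Matrix (Fin n) (Fin n) ℂ) (t₀ : ℝ) (hns : (K - t₀ • L).det ≠ 0) :
    ∃ δ > 0, ∀ t : ℝ, |t - t₀| < δ → ∀ μ ∈ spectrum ℝ (K - t • L), δ ≤ |μ| := by
  set F : ℝ × ℝ → ℂ := fun q =>
    ((q.2:ℂ) • (1 : Matrix (Fin n) (Fin n) ℂ) - (K - q.1 • L)).det with hF
  have hcont : Continuous F := by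
    apply Continuous.matrix_det
    apply Continuous.sub
    · exact (Complex.continuous_ofReal.comp continuous_snd).smul continuous_const
    · exact continuous_const.sub (continuous_fst.smul continuous_const)
  have h0 : F (t₀, 0) ≠ 0 := by
    simp only [hF, Complex.ofReal_zero, zero_smul, zero_sub, Matrix.det_neg]
    intro h
    rcases mul_eq_zero.mp h with h | h
    · exact pow_ne_zero _ (neg_ne_zero.mpr one_ne_zero) h
    · exact hns h
  have hopen : IsOpen {q : ℝ × ℝ | F q ≠ 0} :=
    isOpen_compl_singleton.preimage hcont
  obtain ⟨r, hr, hball⟩ := Metric.isOpen_iff.mp hopen (t₀, 0) h0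
  refine ⟨r / 2, by linarith, fun t ht μ hμ => ?_⟩
  by_contra hlt
  push_neg at hlt
  have hmem : (t, μ) ∈ Metric.ball ((t₀ : ℝ), (0 : ℝ)) r := by
    rw [Metric.mem_ball, Prod.dist_eq]
    rw [Real.dist_eq, Real.dist_eq, sub_zero]
    exact max_lt (by linarith) (by linarith)
  exact hball hmem ((spectrum_iff_det μ).mp hμ)

lemma spectrum_bound {A : Matrix (Fin n) (Fin n) ℂ} {μ : ℝ} (hμ : μ ∈ spectrum ℝ A) :
    |μ| ≤ ∑ i, ∑ j, ‖A i j‖ := by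
  have h1 : (μ:ℂ) ∈ spectrum ℂ A := spectrum.algebraMap_mem ℂ hμ
  have h2 : (μ:ℂ) ∈ spectrum ℂ (Matrix.toLin' A) := by
    have he : (Matrix.toLinAlgEquiv' A : (Fin n → ℂ) →ₗ[ℂ] (Fin n → ℂ)) = Matrix.toLin' A := rfl
    rw [← he, AlgEquiv.spectrum_eq (Matrix.toLinAlgEquiv' : Matrix (Fin n) (Fin n) ℂ ≃ₐ[ℂ] _) A]
    exact h1
  have h3 : Module.End.HasEigenvalue (Matrix.toLin' A) (μ:ℂ) :=
    Module.End.hasEigenvalue_iff_mem_spectrum.mpr h2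
  obtain ⟨i, hi⟩ := eigenvalue_mem_ball h3
  rw [Metric.mem_closedBall] at hi
  have h4 : |μ| ≤ ‖A i i‖ + ∑ j ∈ Finset.univ.erase i, ‖A i j‖ := by
    calc |μ| = ‖(μ:ℂ)‖ := by rw [Complex.norm_real, Real.norm_eq_abs]
    _ = ‖((μ:ℂ) - A i i) + A i i‖ := by ring_nf
    _ ≤ ‖(μ:ℂ) - A i i‖ + ‖A i i‖ := norm_add_le _ _
    _ ≤ ‖A i i‖ + ∑ j ∈ Finset.univ.erase i, ‖A i j‖ := by
        rw [add_comm]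
        refine add_le_add_right ?_ _
        rwa [Complex.dist_eq] at hi
  have h5 : ‖A i i‖ + ∑ j ∈ Finset.univ.erase i, ‖A i j‖ = ∑ j, ‖A i j‖ :=
    Finset.add_sum_erase _ (fun j => ‖A i j‖) (Finset.mem_univ i)
  refine h4.trans (h5.le.trans ?_)
  exact Finset.single_le_sum (f := fun i => ∑ j, ‖A i j‖)
    (fun i _ => Finset.sum_nonneg fun j _ => norm_nonneg _) (Finset.mem_univ i)

lemma unitary_entry_le (U : Matrix.unitaryGroup (Fin n) ℂ) (i j : Fin n) :
    ‖(U : Matrix (Fin n) (Fin n) ℂ) i j‖ ≤ 1 := by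
  have h : (star (U : Matrix (Fin n) (Fin n) ℂ) * U) j j = (1 : Matrix (Fin n) (Fin n) ℂ) j j := by
    rw [Matrix.UnitaryGroup.star_mul_self]
  rw [Matrix.mul_apply, Matrix.one_apply_eq] at h
  have h2 : ∑ k, ‖(U : Matrix (Fin n) (Fin n) ℂ) k j‖ ^ 2 = 1 := by
    have := congrArg Complex.re h
    rw [Complex.re_sum, Complex.one_re] at this
    rw [← this]
    apply Finset.sum_congr rfl
    intro k _
    rw [Matrix.star_apply]
    rw [show (star ((U : Matrix (Fin n) (Fin n) ℂ) k j) * (U : Matrix (Fin n) (Fin n) ℂ) k j)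
      = ((Complex.normSq ((U : Matrix (Fin n) (Fin n) ℂ) k j) : ℝ) : ℂ) from by
        rw [Complex.star_def, Complex.normSq_eq_conj_mul_self]]
    rw [Complex.ofReal_re, Complex.sq_norm]
  have h3 : ‖(U : Matrix (Fin n) (Fin n) ℂ) i j‖ ^ 2 ≤ 1 := by
    rw [← h2]
    exact Finset.single_le_sum (f := fun k => ‖(U : Matrix (Fin n) (Fin n) ℂ) k j‖ ^ 2)
      (fun k _ => sq_nonneg _) (Finset.mem_univ i)
  nlinarith [norm_nonneg ((U : Matrix (Fin n) (Fin n) ℂ) i j)]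

lemma trace_mul_cfc_bound (Lm : Matrix (Fin n) (Fin n) ℂ) {A : Matrix (Fin n) (Fin n) ℂ}
    (hA : A.IsHermitian) (h : ℝ → ℝ) (ε : ℝ)
    (hε : ∀ i, |h (hA.eigenvalues i)| ≤ ε) :
    |((Lm * hA.cfc h).trace).re| ≤ (∑ j, ∑ k, ‖Lm j k‖) * n * ε := by
  set U : Matrix (Fin n) (Fin n) ℂ := (hA.eigenvectorUnitary : Matrix (Fin n) (Fin n) ℂ) with hU
  set V : Matrix (Fin n) (Fin n) ℂ := star U with hV
  set d : Fin n → ℂ := fun i => (h (hA.eigenvalues i) : ℂ) with hd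
  set CL : ℝ := ∑ j, ∑ k, ‖Lm j k‖ with hCL
  have hCL0 : 0 ≤ CL := Finset.sum_nonneg fun j _ => Finset.sum_nonneg fun k _ => norm_nonneg _
  have htr : (Lm * hA.cfc h).trace = ∑ i, (V * Lm * U) i i * d i := by
    have e1 : Lm * hA.cfc h = (Lm * U * Matrix.diagonal d) * V := by
      rw [Matrix.IsHermitian.cfc, Unitary.conjStarAlgAut_apply]
      simp only [Matrix.mul_assoc, hU, hV, hd]
      rfl
    rw [e1, Matrix.trace_mul_comm, ← Matrix.mul_assoc, ← Matrix.mul_assoc, Matrix.trace]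
    apply Finset.sum_congr rfl
    intro i _
    rw [Matrix.diag_apply, Matrix.mul_diagonal]
  have hM : ∀ i, ‖(V * Lm * U) i i‖ ≤ CL := by
    intro i
    calc ‖(V * Lm * U) i i‖ = ‖∑ k, (∑ j, V i j * Lm j k) * U k i‖ := by
          simp only [Matrix.mul_apply]
    _ ≤ ∑ k, ‖(∑ j, V i j * Lm j k) * U k i‖ := norm_sum_le _ _
    _ ≤ ∑ k, ∑ j, ‖Lm j k‖ := by
        apply Finset.sum_le_sum
        intro k _
        rw [norm_mul]
        calc ‖∑ j, V i j * Lm j k‖ * ‖U k i‖ ≤ ‖∑ j, V i j * Lm j k‖ * 1 := by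
              exact mul_le_mul_of_nonneg_left (unitary_entry_le _ _ _) (norm_nonneg _)
        _ = ‖∑ j, V i j * Lm j k‖ := mul_one _
        _ ≤ ∑ j, ‖V i j * Lm j k‖ := norm_sum_le _ _
        _ ≤ ∑ j, ‖Lm j k‖ := by
            apply Finset.sum_le_sum
            intro j _
            rw [norm_mul]
            have : ‖V i j‖ ≤ 1 := by
              rw [hV, Matrix.star_apply, norm_star]
              exact unitary_entry_le _ _ _
            nlinarith [norm_nonneg (Lm j k), norm_nonneg (V i j)]
    _ = CL := by rw [hCL]; exact Finset.sum_comm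
  calc |((Lm * hA.cfc h).trace).re| ≤ ‖(Lm * hA.cfc h).trace‖ := Complex.abs_re_le_norm _
  _ = ‖∑ i, (V * Lm * U) i i * d i‖ := by rw [htr]
  _ ≤ ∑ i, ‖(V * Lm * U) i i * d i‖ := norm_sum_le _ _
  _ ≤ ∑ _i : Fin n, CL * ε := by
      apply Finset.sum_le_sum
      intro i _
      rw [norm_mul]
      have hdi : ‖d i‖ ≤ ε := by
        rw [hd, Complex.norm_real, Real.norm_eq_abs]
        exact hε i
      exact mul_le_mul (hM i) hdi (norm_nonneg _) hCL0
  _ = CL * n * ε := by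
      rw [Finset.sum_const, Finset.card_univ, Fintype.card_fin]
      ring

lemma exists_poly_near (R ε : ℝ) (hε : 0 < ε) (g : ℝ → ℝ) (hg : Continuous g) :
    ∃ q : Polynomial ℝ, ∀ x ∈ Set.Icc (-R) R, |g x - Polynomial.eval x q| < ε := by
  have hcs : CompactSpace (Set.Icc (-R) R) := isCompact_iff_compactSpace.mp isCompact_Icc
  obtain ⟨p, hp⟩ := ContinuousMap.exists_mem_subalgebra_near_continuous_of_separatesPoints
    (polynomialFunctions (Set.Icc (-R) R)) (polynomialFunctions_separatesPoints _)
    (fun x => g x) (hg.comp continuous_subtype_val) ε hε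
  have hmem := p.2
  rw [← SetLike.mem_coe, polynomialFunctions_coe] at hmem
  obtain ⟨q, hq⟩ := hmem
  refine ⟨q, fun x hx => ?_⟩
  have := hp ⟨x, hx⟩
  rw [← hq] at this
  simpa [Real.norm_eq_abs, abs_sub_comm] using this

lemma isHermitian_aux {K L : Matrix (Fin n) (Fin n) ℂ} (hK : K.IsHermitian)
    (hL : L.IsHermitian) (t : ℝ) : (K - t • L).IsHermitian := by
  apply hK.sub
  unfold Matrix.IsHermitian
  rw [Matrix.conjTranspose_smul, star_trivial, hL.eq]

lemma phi_cont (K L : Matrix (Fin n) (Fin n) ℂ) (hK : K.IsHermitian) (hL : L.IsHermitian)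
    (t₀ : ℝ) (hns : (K - t₀ • L).det ≠ 0) :
    ContinuousAt (fun t : ℝ =>
      ((L * mfun (fun x => if 0 < x then 1 else 0) (K - t • L)).trace).re) t₀ := by
  classical
  set ind : ℝ → ℝ := fun x => if 0 < x then 1 else 0 with hind
  have hA : ∀ t : ℝ, (K - t • L).IsHermitian := isHermitian_aux hK hL
  obtain ⟨δ, hδ, hgap⟩ := exists_gap K L t₀ hns
  set CK : ℝ := ∑ i, ∑ j, ‖K i j‖ with hCK
  set CL : ℝ := ∑ i, ∑ j, ‖L i j‖ with hCL
  have hCL0 : 0 ≤ CL := Finset.sum_nonneg fun j _ => Finset.sum_nonneg fun k _ => norm_nonneg _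
  set R : ℝ := CK + (|t₀| + δ) * CL with hR
  -- spectrum bound
  have hspec : ∀ t : ℝ, |t - t₀| < δ → ∀ μ ∈ spectrum ℝ (K - t • L), μ ∈ Set.Icc (-R) R := by
    intro t ht μ hμ
    have h1 : |μ| ≤ ∑ i, ∑ j, ‖(K - t • L) i j‖ := spectrum_bound hμ
    have h2 : ∑ i, ∑ j, ‖(K - t • L) i j‖ ≤ R := by
      calc ∑ i, ∑ j, ‖(K - t • L) i j‖
          ≤ ∑ i, ∑ j, (‖K i j‖ + (|t₀| + δ) * ‖L i j‖) := by
            apply Finset.sum_le_sum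
            intro i _
            apply Finset.sum_le_sum
            intro j _
            have hb : ‖(K - t • L) i j‖ ≤ ‖K i j‖ + |t| * ‖L i j‖ := by
              calc ‖(K - t • L) i j‖ = ‖K i j - t • L i j‖ := rfl
              _ ≤ ‖K i j‖ + ‖t • L i j‖ := norm_sub_le _ _
              _ = ‖K i j‖ + |t| * ‖L i j‖ := by rw [norm_smul, Real.norm_eq_abs]
            refine hb.trans (add_le_add_right ?_ _)
            have htle : |t| ≤ |t₀| + δ := by
              have := abs_sub_abs_le_abs_sub t t₀
              linarith [ht.le]
            exact mul_le_mul_of_nonneg_right htle (norm_nonneg _)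
      _ = R := by
          rw [hR, hCK, hCL, Finset.mul_sum, ← Finset.sum_add_distrib]
          exact Finset.sum_congr rfl fun i _ => by
            rw [Finset.mul_sum, ← Finset.sum_add_distrib]
    exact Set.mem_Icc.mpr (abs_le.mp (h1.trans h2))
  -- the continuous surrogate g
  set g : ℝ → ℝ := fun x => max 0 (min 1 (x / δ)) with hg
  have hgcont : Continuous g := by
    apply continuous_const.max
    exact continuous_const.min (continuous_id.div_const δ)
  have hgind : ∀ t : ℝ, |t - t₀| < δ → ∀ μ ∈ spectrum ℝ (K - t • L), g μ = ind μ := by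
    intro t ht μ hμ
    have h1 : δ ≤ |μ| := hgap t ht μ hμ
    rcases le_abs.mp h1 with h | h
    · -- δ ≤ μ
      have h0 : 0 < μ := lt_of_lt_of_le hδ h
      have : (1:ℝ) ≤ μ / δ := (one_le_div hδ).mpr h
      simp only [hg, hind]
      rw [min_eq_left this, max_eq_right zero_le_one, if_pos h0]
    · -- δ ≤ -μ
      have h0 : ¬ (0 < μ) := by push_neg; linarith
      have hle : μ / δ ≤ 0 := div_nonpos_iff.mpr (Or.inr ⟨by linarith, hδ.le⟩)
      simp only [hg, hind]
      rw [min_eq_right (hle.trans zero_le_one), max_eq_left hle, if_neg h0]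
  -- main estimate
  rw [Metric.continuousAt_iff]
  intro ε hε
  set ε'' : ℝ := ε / (4 * (CL * n + 1)) with hε''
  have hcn : (0:ℝ) < CL * n + 1 := by positivity
  have hε''pos : 0 < ε'' := by positivity
  obtain ⟨q, hq⟩ := exists_poly_near R ε'' hε''pos g hgcont
  -- difference bound between φ and polynomial surrogate ψ
  set ψ : ℝ → ℝ := fun t => ((L * Polynomial.aeval (K - t • L) q).trace).re with hψ
  have hdiff : ∀ t : ℝ, |t - t₀| < δ →
      |((L * mfun ind (K - t • L)).trace).re - ψ t| ≤ ε / 4 := by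
    intro t ht
    have hAt := hA t
    have hAt' : IsSelfAdjoint (K - t • L) := hAt
    have e1 : mfun ind (K - t • L) - Polynomial.aeval (K - t • L) q
        = cfc (fun x => ind x - Polynomial.eval x q) (K - t • L) := by
      rw [mfun_eq hAt, ← cfc_polynomial q (K - t • L),
        cfc_sub ind (fun x => Polynomial.eval x q) (K - t • L) (contOn _ _) (contOn _ _)]
    have e2 : ((L * mfun ind (K - t • L)).trace).re - ψ t
        = ((L * cfc (fun x => ind x - Polynomial.eval x q) (K - t • L)).trace).re := by
      rw [hψ, ← Complex.sub_re, ← Matrix.trace_sub, ← Matrix.mul_sub, e1]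
    rw [e2]
    have e3 : cfc (fun x => ind x - Polynomial.eval x q) (K - t • L)
        = hAt.cfc (fun x => ind x - Polynomial.eval x q) := hAt.cfc_eq _
    rw [e3]
    have hb : ∀ i, |(fun x => ind x - Polynomial.eval x q) (hAt.eigenvalues i)| ≤ ε'' := by
      intro i
      have hmem := hAt.eigenvalues_mem_spectrum_real i
      have h1 := hgind t ht _ hmem
      have h2 := (hq _ (hspec t ht _ hmem)).le
      show |ind (hAt.eigenvalues i) - Polynomial.eval (hAt.eigenvalues i) q| ≤ ε''
      rw [← h1]
      exact h2
    calc |((L * hAt.cfc _).trace).re| ≤ CL * n * ε'' := trace_mul_cfc_bound L hAt _ ε'' hb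
    _ ≤ ε / 4 := by
        rw [hε'']
        rw [div_eq_mul_inv, div_eq_mul_inv]
        have h4 : CL * n ≤ CL * n + 1 := by linarith
        have : CL * ↑n * (ε * (4 * (CL * ↑n + 1))⁻¹) = ε * 4⁻¹ * ((CL * n) / (CL * n + 1)) := by
          field_simp
        rw [this]
        have hle1 : (CL * n) / (CL * n + 1) ≤ 1 := by
          rw [div_le_one hcn]; linarith
        have hεnn : 0 ≤ ε * 4⁻¹ := by positivity
        nlinarith
  -- continuity of ψ
  have hψcont : Continuous ψ := by
    apply Complex.continuous_re.comp
    apply Continuous.matrix_trace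
    apply Continuous.matrix_mul continuous_const
    exact (Polynomial.continuous_aeval q).comp
      (continuous_const.sub (continuous_id.smul continuous_const))
  have hψc : ContinuousAt ψ t₀ := hψcont.continuousAt
  rw [Metric.continuousAt_iff] at hψc
  obtain ⟨η₂, hη₂, hψb⟩ := hψc (ε/4) (by positivity)
  refine ⟨min δ η₂, lt_min hδ hη₂, fun {t} ht => ?_⟩
  rw [Real.dist_eq] at ht ⊢
  have ht1 : |t - t₀| < δ := lt_of_lt_of_le ht (min_le_left _ _)
  have ht2 : dist t t₀ < η₂ := by
    rw [Real.dist_eq]; exact lt_of_lt_of_le ht (min_le_right _ _)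
  have h1 := hdiff t ht1
  have h2 := hdiff t₀ (by simpa using hδ)
  have h3 := hψb ht2
  rw [Real.dist_eq] at h3
  rw [abs_sub_comm] at h2
  calc |((L * mfun ind (K - t • L)).trace).re - ((L * mfun ind (K - t₀ • L)).trace).re|
      ≤ |((L * mfun ind (K - t • L)).trace).re - ψ t|
        + |ψ t - ((L * mfun ind (K - t₀ • L)).trace).re| := abs_sub_le _ _ _
  _ ≤ |((L * mfun ind (K - t • L)).trace).re - ψ t|
      + (|ψ t - ψ t₀| + |ψ t₀ - ((L * mfun ind (K - t₀ • L)).trace).re|) := by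
        have := abs_sub_le (ψ t) (ψ t₀) (((L * mfun ind (K - t₀ • L)).trace).re)
        linarith
  _ < ε := by linarith

end AuxLemmas

/-- if `K - t₀ L` is nonsingular, then `t ↦ Tr[(K - tL)₊]` is differentiable
at `t₀` with derivative `-Tr[L {K > t₀ L}]`, and `Tr[L {K > t₀ L}] = Tr[L {K ≥ t₀ L}]`. -/
theorem hasDerivAt_trace_posPart (n : ℕ) (K L : Matrix (Fin n) (Fin n) ℂ)
    (hK : K.IsHermitian) (hL : L.IsHermitian) (t₀ : ℝ) (hns : (K - t₀ • L).det ≠ 0) :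
    HasDerivAt (fun t : ℝ => ((mposPart (K - t • L)).trace).re)
      (-((L * projGt K L t₀).trace).re) t₀ ∧
    (L * projGt K L t₀).trace =
      (L * mfun (fun x => if 0 ≤ x then 1 else 0) (K - t₀ • L)).trace := by
  classical
  set ind : ℝ → ℝ := fun x => if 0 < x then 1 else 0 with hind
  have hA : ∀ t : ℝ, (K - t • L).IsHermitian := isHermitian_aux hK hL
  set X : ℝ → Matrix (Fin n) (Fin n) ℂ := fun t => mfun ind (K - t • L) with hX
  have hXcfc : ∀ t, X t = cfc ind (K - t • L) := fun t => mfun_eq (hA t) ind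
  set f : ℝ → ℝ := fun t => ((mposPart (K - t • L)).trace).re with hf
  set φ : ℝ → ℝ := fun t => ((L * X t).trace).re with hφ
  -- identity: mposPart = (K - t L) * X t
  have key1 : ∀ t, mposPart (K - t • L) = (K - t • L) * X t := by
    intro t
    rw [hXcfc t]
    exact posPart_eq_mul_proj (hA t)
  -- PSD facts
  have hXpsd : ∀ s, (X s).PosSemidef := by
    intro s
    rw [hXcfc s]
    exact cfc_psd (hA s) ind (fun x => by rw [hind]; dsimp; split <;> norm_num)
  have hX1psd : ∀ s, ((1:Matrix (Fin n) (Fin n) ℂ) - X s).PosSemidef := by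
    intro s
    have e : (1:Matrix (Fin n) (Fin n) ℂ) - X s = cfc (fun x => 1 - ind x) (K - s • L) := by
      have h1 : cfc (fun _ : ℝ => (1:ℝ)) (K - s • L) = 1 := cfc_const_one ℝ _ (hA s)
      rw [hXcfc s, cfc_sub (fun _ => (1:ℝ)) ind (K - s • L) (contOn _ _) (contOn _ _), h1]
    rw [e]
    exact cfc_psd (hA s) _ (fun x => by rw [hind]; dsimp; split <;> norm_num)
  -- upper bound by positive part
  have key2 : ∀ t s, (((K - t • L) * X s).trace).re ≤ f t := by
    intro t s
    exact trace_mul_le_posPart (hA t) (hXpsd s) (hX1psd s)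
  -- linear shift
  have key3 : ∀ t s, (((K - t • L) * X s).trace).re
      = (((K - t₀ • L) * X s).trace).re + (t₀ - t) * φ s := by
    intro t s
    have hAd : (K - t • L) - (K - t₀ • L) = (t₀ - t) • L := by
      ext i j
      simp only [Matrix.sub_apply, Matrix.smul_apply, Complex.real_smul]
      push_cast
      ring
    have : ((K - t • L) * X s) = ((K - t₀ • L) * X s) + ((t₀ - t) • L) * X s := by
      rw [← hAd]
      noncomm_ring
    rw [this, Matrix.trace_add, Complex.add_re, Matrix.smul_mul, Matrix.trace_smul]
    congr 1
    simp [Complex.real_smul, Complex.mul_re, hφ]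
  -- squeeze
  have Ebound : ∀ t, 0 ≤ f t - f t₀ + (t - t₀) * φ t₀ ∧
      f t - f t₀ + (t - t₀) * φ t₀ ≤ (t₀ - t) * (φ t - φ t₀) := by
    intro t
    have hft : f t = (((K - t • L) * X t).trace).re := by rw [hf]; dsimp; rw [key1 t]
    have hft₀ : f t₀ = (((K - t₀ • L) * X t₀).trace).re := by rw [hf]; dsimp; rw [key1 t₀]
    constructor
    · have h1 : (((K - t • L) * X t₀).trace).re ≤ f t := key2 t t₀
      have h2 := key3 t t₀
      rw [hft₀]
      nlinarith [h1, h2]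
    · have h1 : (((K - t₀ • L) * X t).trace).re ≤ f t₀ := key2 t₀ t
      have h2 := key3 t t
      rw [hft]
      nlinarith [h1, h2]
  -- part 1
  have hproj : projGt K L t₀ = X t₀ := rfl
  have hderiv : HasDerivAt f (-φ t₀) t₀ := by
    rw [hasDerivAt_iff_isLittleO]
    rw [Asymptotics.isLittleO_iff]
    intro c hc
    have hφc : ContinuousAt φ t₀ := phi_cont K L hK hL t₀ hns
    have hev : ∀ᶠ t in nhds t₀, |φ t - φ t₀| ≤ c := by
      have := Metric.tendsto_nhds.mp hφc c hc
      filter_upwards [this] with t ht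
      rw [Real.dist_eq] at ht
      exact ht.le
    filter_upwards [hev] with t ht
    have hE := Ebound t
    have e1 : f t - f t₀ - (t - t₀) • (-φ t₀) = f t - f t₀ + (t - t₀) * φ t₀ := by
      rw [smul_eq_mul]; ring
    rw [Real.norm_eq_abs, Real.norm_eq_abs, e1]
    have habs : |f t - f t₀ + (t - t₀) * φ t₀| ≤ |t - t₀| * |φ t - φ t₀| := by
      rw [abs_of_nonneg hE.1]
      calc f t - f t₀ + (t - t₀) * φ t₀ ≤ (t₀ - t) * (φ t - φ t₀) := hE.2
      _ ≤ |(t₀ - t) * (φ t - φ t₀)| := le_abs_self _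
      _ = |t - t₀| * |φ t - φ t₀| := by rw [abs_mul, abs_sub_comm t₀ t]
    calc |f t - f t₀ + (t - t₀) * φ t₀| ≤ |t - t₀| * |φ t - φ t₀| := habs
    _ ≤ |t - t₀| * c := mul_le_mul_of_nonneg_left ht (abs_nonneg _)
    _ = c * |t - t₀| := mul_comm _ _
  refine ⟨hderiv, ?_⟩
  -- part 2
  have h0 : (0:ℝ) ∉ spectrum ℝ (K - t₀ • L) := by
    intro h
    rw [spectrum_iff_det] at h
    simp only [Complex.ofReal_zero, zero_smul, zero_sub, Matrix.det_neg] at h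
    rcases mul_eq_zero.mp h with h | h
    · exact pow_ne_zero _ (neg_ne_zero.mpr one_ne_zero) h
    · exact hns h
  have : X t₀ = mfun (fun x => if 0 ≤ x then 1 else 0) (K - t₀ • L) := by
    rw [hXcfc t₀, mfun_eq (hA t₀)]
    apply cfc_congr
    intro x hx
    have hne : x ≠ 0 := fun he => h0 (he ▸ hx)
    rw [hind]
    dsimp
    rcases lt_trichotomy 0 x with h | h | h
    · rw [if_pos h, if_pos h.le]
    · exact absurd h.symm hne
    · rw [if_neg (by linarith), if_neg (by linarith)]
  rw [hproj, this]

end
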